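/- Let θ be the primitive random substitution θ(a) = {aa, ab}, θ(b) = {ba}. Then the topological entropy of X_θ equals the series Σ_{n=1}^∞ 2^{-n} log n. -/

import Mathlib

open Filter Topology

namespace RandSub

variable {A : Type*} [DecidableEq A]

/-- Extension of a substitution to words: set of all concatenations of realisations. -/
def wordSubst (θ : A → Finset (List A)) : List A → Finset (List A)
  | [] => {([] : List A)}
  | a :: u => (θ a).biUnion fun v => (wordSubst θ u).image fun w => v ++ w

/-- Powers of a random substitution: `substPow θ m a` is the set of realisations of `θ^m(a)`. -/
def substPow (θ : A → Finset (List A)) : ℕ → A → Finset (List A)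
  | 0, a => {[a]}
  | m + 1, a => (substPow θ m a).biUnion fun v => wordSubst θ v

/-- `θ^m` applied to a word. -/
def wordSubstPow (θ : A → Finset (List A)) (m : ℕ) (u : List A) : Finset (List A) :=
  wordSubst (fun a => substPow θ m a) u

/-- A word is θ-legal if it occurs as a subword of some realisation of some `θ^k(a)`. -/
def IsLegal (θ : A → Finset (List A)) (u : List A) : Prop :=
  ∃ (a : A) (k : ℕ) (w : List A), w ∈ substPow θ k a ∧ u <:+: w

/-- The finite subword of a bi-infinite sequence `x` of length `n` starting at position `i`. -/
def wordAt {B : Type*} (x : ℤ → B) (i : ℤ) (n : ℕ) : List B :=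
  (List.range n).map fun j => x (i + j)

/-- The subshift associated with a random substitution. -/
def substShift (θ : A → Finset (List A)) : Set (ℤ → A) :=
  {x | ∀ (i : ℤ) (n : ℕ), IsLegal θ (wordAt x i n)}

/-- The language of a subshift. -/
def lang {B : Type*} (X : Set (ℤ → B)) : Set (List B) :=
  {u | ∃ x ∈ X, ∃ i : ℤ, u = wordAt x i u.length}

/-- The complexity function of a subshift. -/
noncomputable def complexity {B : Type*} (X : Set (ℤ → B)) (n : ℕ) : ℕ :=
  Nat.card {u : List B | u.length = n ∧ u ∈ lang X}

/-- Topological entropy of a subshift (defined via `limsup`; when the limit of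
`log p_X(n) / n` exists it coincides with it). -/
noncomputable def topEntropy {B : Type*} (X : Set (ℤ → B)) : ℝ :=
  Filter.atTop.limsup fun n : ℕ => Real.log (complexity X n) / n

/-- Primitivity of a random substitution. -/
def IsPrimitive (θ : A → Finset (List A)) : Prop :=
  ∃ k : ℕ, 0 < k ∧ ∀ a b : A, ∃ w ∈ substPow θ k b, a ∈ w

/-- A random substitution has constant length `ℓ`. -/
def ConstantLength (θ : A → Finset (List A)) (ℓ : ℕ) : Prop :=
  2 ≤ ℓ ∧ ∀ a : A, ∀ w ∈ θ a, w.length = ℓ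

/-- Permissible letter frequency vectors. -/
def IsPLFV (θ : A → Finset (List A)) (ν : A → ℝ) : Prop :=
  (∀ a, ν a ∈ Set.Icc (0 : ℝ) 1) ∧
  ∃ b : A, [b] ∈ lang (substShift θ) ∧
    ∃ n : ℕ → ℕ, Tendsto n atTop atTop ∧
      ∃ v : ℕ → List A, (∀ k, v k ∈ substPow θ (n k) b) ∧
        ∀ a, Tendsto (fun k => ((v k).count a : ℝ) / (v k).length) atTop (𝓝 (ν a))

end RandSub

open RandSub Filter Topology

/-- A two-letter alphabet. -/
inductive AB | a | b
  deriving DecidableEq, Repr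

instance : Fintype AB := ⟨{.a, .b}, by intro x; cases x <;> simp⟩

/-- The random substitution θ(a) = {aa, ab}, θ(b) = {ba}. -/
def theta2 : AB → Finset (List AB)
  | .a => {[.a, .a], [.a, .b]}
  | .b => {[.b, .a]}

/-!
Since `θ` has constant length `2` and `θ(a) ∩ θ(b) = ∅`, a realisation of `θ^(m+1)(c)` determines
the realisations of `θ^m` it is made of, which gives the recursions
`#θ^(m+1)(a) = #θ^m(a) (#θ^m(a) + #θ^m(b))` and `#θ^(m+1)(b) = #θ^m(b) #θ^m(a)`; hence
`#θ^m(a) = (m + 1) #θ^m(b)` and `2^(-m) log #θ^m(b) = ∑_{n<m} log (n + 1) / 2^(n+1)`.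

Every legal word of length `n` is read, at an offset below `2^m`, from a concatenation of
`n / 2^m + 2` level-`m` inflation words, and every element of `θ^m(a^r)` is legal. This squeezes
the entropy between `2^(-m) log #θ^m(b)` and `2^(-m) log ((m + 2) #θ^m(b))`, and both bounds tend
to the series. Legal words are exactly the words of `X_θ`: a legal word lies in some
`w ∈ θ^k(a)`, and `w` can be padded with arbitrarily many `a`s on both sides inside `θ^K(a)`, so
`w` written in a sea of `a`s is a point of `X_θ`.
-/

namespace List

variable {α : Type*}

lemma take_drop_eq_of_prefix {p l : List α} (hp : p <+: l) {a n : ℕ} (h : a + n ≤ p.length) :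
    (l.drop a).take n = (p.drop a).take n := by
  obtain ⟨r, rfl⟩ := hp
  rw [drop_append_of_le_length (by omega), take_append_of_le_length (by simp; omega)]

lemma length_flatten_of_forall_length_eq {ℓ : ℕ} {B : List (List α)}
    (hB : ∀ b ∈ B, b.length = ℓ) : B.flatten.length = B.length * ℓ := by
  simp [length_flatten, map_congr_left hB]

lemma drop_mul_flatten_of_forall_length_eq {ℓ : ℕ} {B : List (List α)}
    (hB : ∀ b ∈ B, b.length = ℓ) {q : ℕ} (hq : q ≤ B.length) :
    B.flatten.drop (q * ℓ) = (B.drop q).flatten := by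
  rw [← drop_sum_flatten, map_congr_left hB, map_const', take_replicate, sum_replicate,
    smul_eq_mul, min_eq_left hq]

lemma exists_eq_take_drop_flatten_drop_of_infix {ℓ : ℕ} (hℓ : 0 < ℓ) {B : List (List α)}
    (hB : ∀ b ∈ B, b.length = ℓ) {u : List α} (hu : u <:+: B.flatten) :
    ∃ t < ℓ, ∃ q, t + u.length ≤ (B.drop q).flatten.length ∧
      u = ((B.drop q).flatten.drop t).take u.length := by
  obtain ⟨s, s', hss'⟩ := hu
  have hsu : s.length + u.length ≤ B.length * ℓ := by
    rw [← length_flatten_of_forall_length_eq hB, ← hss']; simp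
  have hqt : s.length / ℓ * ℓ + s.length % ℓ = s.length := by
    rw [Nat.mul_comm]; exact Nat.div_add_mod _ _
  have hq : s.length / ℓ ≤ B.length := by
    rw [Nat.div_le_iff_le_mul_add_pred hℓ]; nlinarith
  refine ⟨s.length % ℓ, Nat.mod_lt _ hℓ, s.length / ℓ, ?_, ?_⟩
  · rw [length_flatten_of_forall_length_eq fun b hb => hB b (mem_of_mem_drop hb), length_drop,
      Nat.sub_mul]
    omega
  · rw [← drop_mul_flatten_of_forall_length_eq hB hq, drop_drop, hqt, ← hss', append_assoc,
      drop_left, take_left]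

lemma exists_eq_take_drop_flatten_of_infix {ℓ : ℕ} (hℓ : 0 < ℓ) {S : Set (List α)}
    (hS : ∀ b ∈ S, b.length = ℓ) {pad : List α} (hpad : pad ∈ S) {B : List (List α)}
    (hB : ∀ b ∈ B, b ∈ S) {u : List α} (hu : u <:+: B.flatten) :
    ∃ t < ℓ, ∃ C : List (List α), C.length = u.length / ℓ + 2 ∧ (∀ b ∈ C, b ∈ S) ∧
      u = (C.flatten.drop t).take u.length := by
  obtain ⟨t, ht, q, htq, hu⟩ :=
    exists_eq_take_drop_flatten_drop_of_infix hℓ (fun b hb => hS b (hB b hb)) hu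
  set r := u.length / ℓ + 2
  set D := B.drop q ++ replicate r pad
  have hD : ∀ b ∈ D, b ∈ S := by
    simp only [D, mem_append, mem_replicate]
    rintro b (hb | ⟨-, rfl⟩)
    exacts [hB b (mem_of_mem_drop hb), hpad]
  have hDr : (D.take r).flatten.length = r * ℓ := by
    rw [length_flatten_of_forall_length_eq fun b hb => hS b (hD b (mem_of_mem_take hb))]
    simp [D, r]
  have hr : t + u.length ≤ r * ℓ := by
    have := Nat.lt_div_mul_add hℓ (a := u.length)
    simp only [r, Nat.add_mul]
    omega
  refine ⟨t, ht, D.take r, by simp [D, r], fun b hb => hD b (mem_of_mem_take hb), ?_⟩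
  calc u = ((B.drop q).flatten.drop t).take u.length := hu
    _ = (D.flatten.drop t).take u.length :=
        (take_drop_eq_of_prefix (by simp [D, flatten_append]) htq).symm
    _ = ((D.take r).flatten.drop t).take u.length :=
        take_drop_eq_of_prefix (take_prefix r D).flatten (by omega)

lemma replicate_append_append_replicate_infix (d : α) (w : List α) {L L' R R' : ℕ}
    (hL : L ≤ L') (hR : R ≤ R') :
    replicate L d ++ w ++ replicate R d <:+:
      replicate L' d ++ w ++ replicate R' d := by
  refine ⟨replicate (L' - L) d, replicate (R' - R) d, ?_⟩
  simp only [append_assoc, ← replicate_add]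
  rw [Nat.add_sub_cancel' hR, ← append_assoc, ← replicate_add, Nat.sub_add_cancel hL]

lemma ncard_infix_flatten_le {ℓ : ℕ} (hℓ : 0 < ℓ) {S : Finset (List α)}
    (hS : ∀ b ∈ S, b.length = ℓ) {pad : List α} (hpad : pad ∈ S) (n : ℕ) :
    {u : List α | u.length = n ∧ ∃ B : List (List α), (∀ b ∈ B, b ∈ S) ∧ u <:+: B.flatten}.ncard
      ≤ ℓ * S.card ^ (n / ℓ + 2) := by
  classical
  set r := n / ℓ + 2
  set T : Finset (List α) := (Finset.range ℓ ×ˢ Fintype.piFinset fun _ : Fin r => S).image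
    fun p => ((ofFn p.2).flatten.drop p.1).take n
  have hsub : {u : List α | u.length = n ∧
      ∃ B : List (List α), (∀ b ∈ B, b ∈ S) ∧ u <:+: B.flatten} ⊆ T := by
    rintro u ⟨rfl, B, hB, hu⟩
    obtain ⟨t, ht, C, hC, hCS, hCu⟩ :=
      exists_eq_take_drop_flatten_of_infix hℓ (S := ↑S) hS hpad hB hu
    have hofFn : ofFn (fun i : Fin r => C[i.1]'(by omega)) = C :=
      ext_getElem (by simp [hC, r]) fun _ _ _ => List.getElem_ofFn ..
    refine Finset.mem_image.2 ⟨(t, fun i => C[i.1]'(by omega)), ?_, by rw [hofFn, ← hCu]⟩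
    simp only [Finset.mem_product, Finset.mem_range, Fintype.mem_piFinset]
    exact ⟨ht, fun i => hCS _ (getElem_mem _)⟩
  calc _ ≤ (T : Set (List α)).ncard := Set.ncard_le_ncard hsub T.finite_toSet
    _ = T.card := Set.ncard_coe_finset T
    _ ≤ _ := Finset.card_image_le
    _ = ℓ * S.card ^ r := by simp [Finset.card_product]

end List

lemma limsup_div_le_of_le {f : ℕ → ℝ} (hf : ∀ n, 0 ≤ f n) {k : ℕ} (hk : 0 < k) {c L : ℝ}
    (hL : 0 ≤ L) (h : ∀ n, f n ≤ c + (n / k : ℕ) * L) :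
    limsup (fun n => f n / n) atTop ≤ L / k := by
  have hk' : (0 : ℝ) < k := by exact_mod_cast hk
  have hbound : ∀ᶠ n : ℕ in atTop, f n / n ≤ c / n + L / k := by
    filter_upwards [eventually_gt_atTop 0] with n hn
    have hn' : (0 : ℝ) < n := by exact_mod_cast hn
    rw [div_le_iff₀ hn']
    calc f n ≤ c + (n / k : ℕ) * L := h n
      _ ≤ c + (n / k) * L := by gcongr; exact Nat.cast_div_le
      _ = (c / n + L / k) * n := by field_simp
  have hlim : Tendsto (fun n : ℕ => c / n + L / k) atTop (𝓝 (L / k)) := by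
    simpa using (tendsto_const_div_atTop_nhds_zero_nat c).add_const (L / k)
  calc limsup (fun n => f n / n) atTop ≤ limsup (fun n : ℕ => c / n + L / k) atTop :=
        limsup_le_limsup hbound
          (isCoboundedUnder_le_of_le atTop fun n => div_nonneg (hf n) n.cast_nonneg)
          hlim.isBoundedUnder_le
    _ = L / k := hlim.limsup_eq

lemma le_limsup_div_of_le {f : ℕ → ℝ} (hf : Monotone f)
    (hbdd : IsBoundedUnder (· ≤ ·) atTop fun n => f n / n) {k : ℕ} (hk : 0 < k) {L : ℝ}
    (hL : 0 ≤ L) (h : ∀ r : ℕ, r * L ≤ f (r * k)) :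
    L / k ≤ limsup (fun n => f n / n) atTop := by
  have hk' : (0 : ℝ) < k := by exact_mod_cast hk
  have hbound : ∀ᶠ n : ℕ in atTop, L / k - L / n ≤ f n / n := by
    filter_upwards [eventually_gt_atTop 0] with n hn
    have hn' : (0 : ℝ) < n := by exact_mod_cast hn
    have hdiv : (n : ℝ) / k - 1 ≤ (n / k : ℕ) := by
      have : (n : ℝ) < (n / k : ℕ) * k + k := by exact_mod_cast Nat.lt_div_mul_add hk
      rw [div_sub_one hk'.ne', div_le_iff₀ hk']
      linarith
    rw [le_div_iff₀ hn']
    calc (L / k - L / n) * n = ((n : ℝ) / k - 1) * L := by field_simp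
      _ ≤ (n / k : ℕ) * L := by gcongr
      _ ≤ f (n / k * k) := h _
      _ ≤ f n := hf (Nat.div_mul_le_self n k)
  have hlim : Tendsto (fun n : ℕ => L / k - L / n) atTop (𝓝 (L / k)) := by
    simpa using tendsto_const_nhds.sub (tendsto_const_div_atTop_nhds_zero_nat L)
  calc L / k = limsup (fun n : ℕ => L / k - L / n) atTop := hlim.limsup_eq.symm
    _ ≤ limsup (fun n => f n / n) atTop :=
        limsup_le_limsup hbound hlim.isCoboundedUnder_le hbdd

namespace RandSub

section Substitution

variable {A : Type*} [DecidableEq A] {θ : A → Finset (List A)}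

lemma mem_wordSubst_nil {x : List A} : x ∈ wordSubst θ [] ↔ x = [] := by
  simp [wordSubst]

lemma mem_wordSubst_cons {a : A} {u x : List A} :
    x ∈ wordSubst θ (a :: u) ↔ ∃ v ∈ θ a, ∃ w ∈ wordSubst θ u, x = v ++ w := by
  simp [wordSubst, eq_comm]

lemma mem_wordSubst_append {u v x : List A} :
    x ∈ wordSubst θ (u ++ v) ↔ ∃ y ∈ wordSubst θ u, ∃ z ∈ wordSubst θ v, x = y ++ z := by
  induction u generalizing x with
  | nil => simp [mem_wordSubst_nil]
  | cons a u ih =>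
    simp only [List.cons_append, mem_wordSubst_cons, ih]
    constructor
    · rintro ⟨p, hp, w, ⟨y, hy, z, hz, rfl⟩, rfl⟩
      exact ⟨p ++ y, ⟨p, hp, y, hy, rfl⟩, z, hz, (List.append_assoc _ _ _).symm⟩
    · rintro ⟨w, ⟨p, hp, y, hy, rfl⟩, z, hz, rfl⟩
      exact ⟨p, hp, y ++ z, ⟨y, hy, z, hz, rfl⟩, List.append_assoc _ _ _⟩

lemma wordSubst_nonempty (hθ : ∀ c, (θ c).Nonempty) (u : List A) :
    (wordSubst θ u).Nonempty := by
  induction u with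
  | nil => exact ⟨[], mem_wordSubst_nil.2 rfl⟩
  | cons a u ih =>
    obtain ⟨v, hv⟩ := hθ a
    obtain ⟨w, hw⟩ := ih
    exact ⟨v ++ w, mem_wordSubst_cons.2 ⟨v, hv, w, hw, rfl⟩⟩

lemma exists_flatten_of_mem_wordSubst {u x : List A} (hx : x ∈ wordSubst θ u) :
    ∃ B : List (List A), (∀ b ∈ B, ∃ c, b ∈ θ c) ∧ x = B.flatten := by
  induction u generalizing x with
  | nil => exact ⟨[], by simp, by simpa using mem_wordSubst_nil.1 hx⟩
  | cons a u ih =>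
    obtain ⟨v, hv, w, hw, rfl⟩ := mem_wordSubst_cons.1 hx
    obtain ⟨B, hB, rfl⟩ := ih hw
    refine ⟨v :: B, ?_, rfl⟩
    rintro b (_ | ⟨_, hb⟩)
    exacts [⟨a, hv⟩, hB b hb]

lemma mem_substPow_zero {a : A} {x : List A} : x ∈ substPow θ 0 a ↔ x = [a] := by
  simp [substPow]

lemma mem_substPow_succ {m : ℕ} {a : A} {x : List A} :
    x ∈ substPow θ (m + 1) a ↔ ∃ v ∈ substPow θ m a, x ∈ wordSubst θ v := by
  simp [substPow]

lemma substPow_nonempty (hθ : ∀ c, (θ c).Nonempty) (m : ℕ) (a : A) :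
    (substPow θ m a).Nonempty := by
  induction m with
  | zero => exact ⟨[a], mem_substPow_zero.2 rfl⟩
  | succ m ih =>
    obtain ⟨v, hv⟩ := ih
    obtain ⟨w, hw⟩ := wordSubst_nonempty hθ v
    exact ⟨w, mem_substPow_succ.2 ⟨v, hv, hw⟩⟩

lemma wordSubstPow_zero (u : List A) : wordSubstPow θ 0 u = {u} := by
  induction u with
  | nil => rfl
  | cons a u ih =>
    ext x
    simp only [wordSubstPow] at ih ⊢
    simp [mem_wordSubst_cons, ih, mem_substPow_zero]

lemma mem_wordSubstPow_succ {m : ℕ} {u x : List A} :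
    x ∈ wordSubstPow θ (m + 1) u ↔ ∃ y ∈ wordSubstPow θ m u, x ∈ wordSubst θ y := by
  induction u generalizing x with
  | nil => simp [wordSubstPow, mem_wordSubst_nil]
  | cons a u ih =>
    simp only [wordSubstPow, mem_wordSubst_cons, mem_substPow_succ] at ih ⊢
    constructor
    · rintro ⟨p, ⟨w, hw, hp⟩, q, hq, rfl⟩
      obtain ⟨z, hz, hq⟩ := ih.1 hq
      exact ⟨w ++ z, ⟨w, hw, z, hz, rfl⟩, mem_wordSubst_append.2 ⟨p, hp, q, hq, rfl⟩⟩
    · rintro ⟨y, ⟨w, hw, z, hz, rfl⟩, hx⟩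
      obtain ⟨p, hp, q, hq, rfl⟩ := mem_wordSubst_append.1 hx
      exact ⟨p, ⟨w, hw, hp⟩, q, ih.2 ⟨z, hz, hq⟩, rfl⟩

lemma mem_substPow_add {k m : ℕ} {a : A} {x : List A} :
    x ∈ substPow θ (k + m) a ↔ ∃ v ∈ substPow θ k a, x ∈ wordSubstPow θ m v := by
  induction m generalizing x with
  | zero => simp [wordSubstPow_zero]
  | succ m ih =>
    rw [← Nat.add_assoc, mem_substPow_succ]
    constructor
    · rintro ⟨w, hw, hx⟩
      obtain ⟨v, hv, hw⟩ := ih.1 hw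
      exact ⟨v, hv, mem_wordSubstPow_succ.2 ⟨w, hw, hx⟩⟩
    · rintro ⟨v, hv, hx⟩
      obtain ⟨y, hy, hx⟩ := mem_wordSubstPow_succ.1 hx
      exact ⟨y, ih.2 ⟨v, hv, hy⟩, hx⟩

lemma mem_substPow_succ' {m : ℕ} {a : A} {x : List A} :
    x ∈ substPow θ (m + 1) a ↔ ∃ v ∈ θ a, x ∈ wordSubstPow θ m v := by
  rw [Nat.add_comm, mem_substPow_add]
  simp [mem_substPow_succ, mem_substPow_zero, mem_wordSubst_cons, mem_wordSubst_nil]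

lemma IsLegal.infix {u v : List A} (hv : IsLegal θ v) (huv : u <:+: v) : IsLegal θ u :=
  let ⟨a, k, w, hw, hvw⟩ := hv
  ⟨a, k, w, hw, huv.trans hvw⟩

lemma IsLegal.of_mem_wordSubstPow (hθ : ∀ c, (θ c).Nonempty) {m : ℕ} {u x : List A}
    (hu : IsLegal θ u) (hx : x ∈ wordSubstPow θ m u) : IsLegal θ x := by
  obtain ⟨c, k, w, hw, s, t, rfl⟩ := hu
  obtain ⟨ys, hys⟩ := wordSubst_nonempty (fun c => substPow_nonempty hθ m c) s
  obtain ⟨yt, hyt⟩ := wordSubst_nonempty (fun c => substPow_nonempty hθ m c) t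
  have hmem : ys ++ x ++ yt ∈ wordSubstPow θ m (s ++ u ++ t) :=
    mem_wordSubst_append.2 ⟨ys ++ x, mem_wordSubst_append.2 ⟨ys, hys, x, hx, rfl⟩, yt, hyt, rfl⟩
  exact ⟨c, k + m, ys ++ x ++ yt, mem_substPow_add.2 ⟨_, hw, hmem⟩, List.infix_append _ _ _⟩

section ConstantLength

variable {ℓ : ℕ} (hθ : ∀ a, ∀ w ∈ θ a, w.length = ℓ)
include hθ

lemma length_of_mem_wordSubst {u x : List A} (hx : x ∈ wordSubst θ u) :
    x.length = ℓ * u.length := by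
  induction u generalizing x with
  | nil => simp [mem_wordSubst_nil.1 hx]
  | cons a u ih =>
    obtain ⟨v, hv, w, hw, rfl⟩ := mem_wordSubst_cons.1 hx
    simp [hθ a v hv, ih hw, Nat.mul_succ, Nat.add_comm]

lemma length_of_mem_substPow {m : ℕ} {a : A} {x : List A} (hx : x ∈ substPow θ m a) :
    x.length = ℓ ^ m := by
  induction m generalizing x with
  | zero => simp [mem_substPow_zero.1 hx]
  | succ m ih =>
    obtain ⟨v, hv, hx⟩ := mem_substPow_succ.1 hx
    rw [length_of_mem_wordSubst hθ hx, ih hv, pow_succ, Nat.mul_comm]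

lemma card_wordSubst (u : List A) :
    (wordSubst θ u).card = (u.map fun a => (θ a).card).prod := by
  induction u with
  | nil => rfl
  | cons a u ih =>
    rw [wordSubst, Finset.card_biUnion, List.map_cons, List.prod_cons, ← ih]
    · simp [Finset.card_image_of_injective _ fun _ _ => List.append_cancel_left]
    · intro v hv v' hv' hne
      simp only [Function.onFun, Finset.disjoint_left, Finset.mem_image]
      rintro x ⟨w, -, rfl⟩ ⟨w', -, h⟩
      exact hne (List.append_inj h ((hθ a _ hv').trans (hθ a _ hv).symm)).1.symm

lemma disjoint_wordSubst (hdisj : Pairwise fun a b => Disjoint (θ a) (θ b)) {u v : List A}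
    (hlen : u.length = v.length) (huv : u ≠ v) :
    Disjoint (wordSubst θ u) (wordSubst θ v) := by
  induction u generalizing v with
  | nil => exact absurd (List.length_eq_zero_iff.1 hlen.symm).symm huv
  | cons a u ih =>
    obtain _ | ⟨b, v⟩ := v
    · simp at hlen
    rw [Finset.disjoint_left]
    intro x hx hx'
    obtain ⟨p, hp, w, hw, rfl⟩ := mem_wordSubst_cons.1 hx
    obtain ⟨p', hp', w', hw', h⟩ := mem_wordSubst_cons.1 hx'
    obtain ⟨rfl, rfl⟩ := List.append_inj h ((hθ a _ hp).trans (hθ b _ hp').symm)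
    by_cases hab : a = b
    · subst hab
      exact Finset.disjoint_left.1
        (ih (by simpa using hlen) fun h => huv (h ▸ rfl)) hw hw'
    · exact Finset.disjoint_left.1 (hdisj hab) hp hp'

lemma pairwise_disjoint_substPow (hdisj : Pairwise fun a b => Disjoint (θ a) (θ b)) (m : ℕ) :
    Pairwise fun a b => Disjoint (substPow θ m a) (substPow θ m b) := by
  induction m with
  | zero =>
    intro a b hab
    simpa [substPow] using hab
  | succ m ih =>
    intro a b hab
    rw [Finset.disjoint_left]
    intro x hx hx'
    obtain ⟨v, hv, hx⟩ := mem_substPow_succ.1 hx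
    obtain ⟨v', hv', hx'⟩ := mem_substPow_succ.1 hx'
    have hlen : v.length = v'.length := by
      rw [length_of_mem_substPow hθ hv, length_of_mem_substPow hθ hv']
    have hne : v ≠ v' := fun h => Finset.disjoint_left.1 (ih hab) hv (h ▸ hv')
    exact Finset.disjoint_left.1 (disjoint_wordSubst hθ hdisj hlen hne) hx hx'

lemma card_substPow_succ (hdisj : Pairwise fun a b => Disjoint (θ a) (θ b)) (m : ℕ) (a : A) :
    (substPow θ (m + 1) a).card = ∑ v ∈ θ a, (v.map fun b => (substPow θ m b).card).prod := by
  have hlen : ∀ b, ∀ w ∈ substPow θ m b, w.length = ℓ ^ m :=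
    fun b w hw => length_of_mem_substPow hθ hw
  have hsplit : substPow θ (m + 1) a = (θ a).biUnion (wordSubstPow θ m) := by
    ext x
    simp [mem_substPow_succ']
  rw [hsplit, Finset.card_biUnion]
  · exact Finset.sum_congr rfl fun v _ => card_wordSubst hlen v
  · intro v hv v' hv' hne
    exact disjoint_wordSubst hlen (pairwise_disjoint_substPow hθ hdisj m)
      ((hθ a v hv).trans (hθ a v' hv').symm) hne

end ConstantLength

end Substitution

section Subshift

variable {B : Type*}

-- In `wordAt`, `List.range n` is coerced to `List ℤ` through the list monad.
lemma wordAt_eq_map (x : ℤ → B) (i : ℤ) (n : ℕ) :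
    wordAt x i n = (List.range n).map fun j : ℕ => x (i + j) := by
  simp [wordAt, ← List.map_eq_flatMap]

@[simp]
lemma length_wordAt (x : ℤ → B) (i : ℤ) (n : ℕ) : (wordAt x i n).length = n := by
  simp [wordAt_eq_map]

lemma wordAt_add (x : ℤ → B) (i : ℤ) (n k : ℕ) :
    wordAt x i (n + k) = wordAt x i n ++ wordAt x (i + n) k := by
  simp [wordAt_eq_map, List.range_add, add_assoc]

lemma wordAt_infix_wordAt (x : ℤ → B) {i i' : ℤ} {n n' : ℕ} (hi : i' ≤ i)
    (hn : i + n ≤ i' + n') : wordAt x i n <:+: wordAt x i' n' := by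
  obtain ⟨k, hk⟩ : ∃ k : ℕ, i = i' + k := ⟨(i - i').toNat, by omega⟩
  obtain ⟨r, hr⟩ : ∃ r : ℕ, n' = k + n + r := ⟨n' - k - n, by omega⟩
  rw [hr, wordAt_add, wordAt_add, hk]
  exact List.infix_append _ _ _

lemma wordAt_mem_lang {X : Set (ℤ → B)} {x : ℤ → B} (hx : x ∈ X) (i : ℤ) (n : ℕ) :
    wordAt x i n ∈ lang X :=
  ⟨x, hx, i, by rw [length_wordAt]⟩

lemma mem_lang_of_infix {X : Set (ℤ → B)} {x : ℤ → B} (hx : x ∈ X) {i : ℤ} {u w : List B}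
    (hw : wordAt x i w.length = w) (hu : u <:+: w) : u ∈ lang X := by
  obtain ⟨s, t, rfl⟩ := hu
  rw [List.length_append, List.length_append, wordAt_add, wordAt_add] at hw
  obtain ⟨hsu, -⟩ := List.append_inj hw (by simp)
  obtain ⟨-, hu⟩ := List.append_inj hsu (by simp)
  exact hu ▸ wordAt_mem_lang hx _ _

lemma complexity_mono [Finite B] (X : Set (ℤ → B)) : Monotone (complexity X) := by
  refine monotone_nat_of_le_succ fun n => ?_
  have : Finite {u : List B | u.length = n + 1 ∧ u ∈ lang X} :=
    ((List.finite_length_eq B (n + 1)).subset fun _ hu => hu.1).to_subtype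
  refine Nat.card_le_card_of_surjective
    (fun u => ⟨u.1.take n, by simp [u.2.1], ?_⟩) ?_
  · obtain ⟨hlen, x, hx, i, hu⟩ := u.2
    rw [hu, hlen, wordAt_add, List.take_left' (length_wordAt x i n)]
    exact wordAt_mem_lang hx i n
  · rintro ⟨v, hlen, x, hx, i, hv⟩
    refine ⟨⟨wordAt x i (n + 1), length_wordAt x i _, wordAt_mem_lang hx i _⟩, Subtype.ext ?_⟩
    change (wordAt x i (n + 1)).take n = v
    rw [wordAt_add, List.take_left' (length_wordAt x i n), hv, hlen]

lemma complexity_le_card_pow [Fintype B] (X : Set (ℤ → B)) (n : ℕ) :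
    complexity X n ≤ Fintype.card B ^ n := by
  calc complexity X n ≤ Nat.card (List.Vector B n) :=
        Nat.card_mono (List.finite_length_eq B n) fun _ hu => hu.1
    _ = Fintype.card B ^ n := by rw [Nat.card_eq_fintype_card, card_vector]

lemma complexity_pos [Finite B] {X : Set (ℤ → B)} (hX : X.Nonempty) (n : ℕ) :
    0 < complexity X n := by
  obtain ⟨x, hx⟩ := hX
  have : Finite {u : List B | u.length = n ∧ u ∈ lang X} :=
    ((List.finite_length_eq B n).subset fun _ hu => hu.1).to_subtype
  have : Nonempty {u : List B | u.length = n ∧ u ∈ lang X} :=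
    ⟨⟨wordAt x 0 n, length_wordAt x 0 n, wordAt_mem_lang hx 0 n⟩⟩
  exact Nat.card_pos

lemma monotone_log_complexity [Finite B] {X : Set (ℤ → B)} (hX : X.Nonempty) :
    Monotone fun n => Real.log (complexity X n) := fun _ _ hmn =>
  Real.log_le_log (by exact_mod_cast complexity_pos hX _)
    (by exact_mod_cast complexity_mono X hmn)

lemma isBoundedUnder_log_complexity_div [Fintype B] (X : Set (ℤ → B)) :
    IsBoundedUnder (· ≤ ·) atTop fun n : ℕ => Real.log (complexity X n) / n := by
  refine isBoundedUnder_of ⟨Real.log (Fintype.card B), fun n => ?_⟩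
  rcases (complexity X n).eq_zero_or_pos with h | h
  · simp [h, Real.log_natCast_nonneg]
  rcases n.eq_zero_or_pos with rfl | hn
  · simp [Real.log_natCast_nonneg]
  rw [div_le_iff₀ (by exact_mod_cast hn), mul_comm, ← Real.log_pow]
  exact Real.log_le_log (by exact_mod_cast h) (by exact_mod_cast complexity_le_card_pow X n)

def padPoint (d : B) (w : List B) : ℤ → B :=
  fun i => if 0 ≤ i then w.getD i.toNat d else d

lemma wordAt_padPoint_zero (d : B) (w : List B) : wordAt (padPoint d w) 0 w.length = w := by
  refine List.ext_getElem (by simp) fun j _ hj => ?_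
  simp [wordAt_eq_map, padPoint, List.getElem?_eq_getElem hj]

lemma wordAt_padPoint_neg (d : B) (w : List B) (N : ℕ) :
    wordAt (padPoint d w) (-N) N = List.replicate N d := by
  refine List.eq_replicate_iff.2 ⟨by simp, fun b hb => ?_⟩
  obtain ⟨j, hj, rfl⟩ := List.mem_map.1 ((wordAt_eq_map _ _ _) ▸ hb)
  simp [padPoint, List.mem_range.1 hj]

lemma wordAt_padPoint_right (d : B) (w : List B) (N : ℕ) :
    wordAt (padPoint d w) w.length N = List.replicate N d := by
  refine List.eq_replicate_iff.2 ⟨by simp, fun b hb => ?_⟩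
  obtain ⟨j, -, rfl⟩ := List.mem_map.1 ((wordAt_eq_map _ _ _) ▸ hb)
  simp [padPoint, List.getElem?_eq_none (by omega : w.length ≤ (w.length + j : ℤ).toNat)]

lemma wordAt_padPoint (d : B) (w : List B) (N : ℕ) :
    wordAt (padPoint d w) (-N) (N + w.length + N) =
      List.replicate N d ++ w ++ List.replicate N d := by
  rw [wordAt_add, wordAt_add, wordAt_padPoint_neg]
  simp [wordAt_padPoint_zero, wordAt_padPoint_right]

end Subshift

section Legal

variable {A : Type*} [DecidableEq A] {θ : A → Finset (List A)}

lemma IsLegal.of_mem_lang {u : List A} (hu : u ∈ lang (substShift θ)) : IsLegal θ u := by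
  obtain ⟨x, hx, i, hu⟩ := hu
  rw [hu]
  exact hx i _

lemma padPoint_mem_substShift {d : A} {w : List A}
    (hw : ∀ N, IsLegal θ (List.replicate N d ++ w ++ List.replicate N d)) :
    padPoint d w ∈ substShift θ := by
  intro i n
  refine (hw (n + i.natAbs)).infix ?_
  rw [← wordAt_padPoint]
  exact wordAt_infix_wordAt _ (by omega) (by omega)

end Legal

end RandSub

lemma theta2_length : ∀ c, ∀ w ∈ theta2 c, w.length = 2 := by
  rintro (_ | _) w hw <;> simp only [theta2, Finset.mem_insert, Finset.mem_singleton] at hw <;>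
    rcases hw with rfl | rfl <;> rfl

lemma theta2_nonempty : ∀ c, (theta2 c).Nonempty := by
  rintro (_ | _) <;> simp [theta2]

lemma theta2_pairwise_disjoint : Pairwise fun c c' => Disjoint (theta2 c) (theta2 c') := by
  rintro (_ | _) (_ | _) h <;> simp_all [theta2]

lemma card_substPow_theta2_a_succ (m : ℕ) :
    (substPow theta2 (m + 1) .a).card =
      (substPow theta2 m .a).card *
        ((substPow theta2 m .a).card + (substPow theta2 m .b).card) := by
  rw [card_substPow_succ theta2_length theta2_pairwise_disjoint]
  simp [theta2, mul_add]

lemma card_substPow_theta2_b_succ (m : ℕ) :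
    (substPow theta2 (m + 1) .b).card =
      (substPow theta2 m .b).card * (substPow theta2 m .a).card := by
  rw [card_substPow_succ theta2_length theta2_pairwise_disjoint]
  simp [theta2]

lemma card_substPow_theta2_a (m : ℕ) :
    (substPow theta2 m .a).card = (m + 1) * (substPow theta2 m .b).card := by
  induction m with
  | zero => rfl
  | succ m ih =>
    rw [card_substPow_theta2_a_succ, card_substPow_theta2_b_succ, ih]
    ring

lemma log_card_substPow_theta2_b (m : ℕ) :
    Real.log (substPow theta2 m .b).card =
      2 ^ m * ∑ n ∈ Finset.range m, Real.log (n + 1) / 2 ^ (n + 1) := by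
  induction m with
  | zero => simp [substPow]
  | succ m ih =>
    have hpos : (0 : ℝ) < (substPow theta2 m .b).card := by
      exact_mod_cast (substPow_nonempty theta2_nonempty m .b).card_pos
    rw [card_substPow_theta2_b_succ, card_substPow_theta2_a, Nat.cast_mul, Nat.cast_mul,
      Real.log_mul hpos.ne' (by positivity), Real.log_mul (by positivity) hpos.ne', ih,
      Finset.sum_range_succ]
    push_cast
    field_simp
    ring

lemma append_mem_substPow_theta2_a {m : ℕ} {c : AB} {w z : List AB}
    (hw : w ∈ substPow theta2 m .a) (hz : z ∈ substPow theta2 m c) :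
    w ++ z ∈ substPow theta2 (m + 1) .a := by
  refine mem_substPow_succ'.2 ⟨[.a, c], by cases c <;> simp [theta2], ?_⟩
  exact mem_wordSubst_cons.2 ⟨w, hw, z, mem_wordSubst_cons.2
    ⟨z, hz, [], mem_wordSubst_nil.2 rfl, by simp⟩, rfl⟩

lemma replicate_mem_substPow_theta2 (m : ℕ) :
    List.replicate (2 ^ m) AB.a ∈ substPow theta2 m .a := by
  induction m with
  | zero => exact mem_substPow_zero.2 rfl
  | succ m ih =>
    rw [pow_succ, mul_two, List.replicate_add]
    exact append_mem_substPow_theta2_a ih ih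

lemma exists_prefix_mem_substPow_theta2 {k K : ℕ} (hkK : k ≤ K) {w : List AB}
    (hw : w ∈ substPow theta2 k .a) : ∃ w' ∈ substPow theta2 K .a, w <+: w' := by
  induction K, hkK using Nat.le_induction with
  | base => exact ⟨w, hw, List.prefix_refl w⟩
  | succ K _ ih =>
    obtain ⟨w', hw', hww'⟩ := ih
    exact ⟨_, append_mem_substPow_theta2_a hw' (replicate_mem_substPow_theta2 K),
      hww'.trans (List.prefix_append _ _)⟩

lemma IsLegal.exists_mem_substPow_theta2 {u : List AB} (hu : IsLegal theta2 u) (N : ℕ) :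
    ∃ K ≥ N, ∃ w ∈ substPow theta2 K .a, u <:+: w := by
  obtain ⟨k, w, hw, huw⟩ : ∃ k, ∃ w ∈ substPow theta2 k .a, u <:+: w := by
    obtain ⟨_ | _, k, w, hw, huw⟩ := hu
    · exact ⟨k, w, hw, huw⟩
    · exact ⟨k + 1, _, append_mem_substPow_theta2_a (replicate_mem_substPow_theta2 k) hw,
        huw.trans (List.suffix_append _ _).isInfix⟩
  obtain ⟨w', hw', hww'⟩ := exists_prefix_mem_substPow_theta2 (le_max_right N k) hw
  exact ⟨max N k, le_max_left N k, w', hw', huw.trans hww'.isInfix⟩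

lemma isLegal_replicate_append_append_replicate {k : ℕ} {w : List AB}
    (hw : w ∈ substPow theta2 k .a) (N : ℕ) :
    IsLegal theta2 (List.replicate N .a ++ w ++ List.replicate N .a) := by
  induction N generalizing k w with
  | zero => exact ⟨.a, k, w, hw, by simp⟩
  | succ N ih =>
    have hw' := append_mem_substPow_theta2_a (replicate_mem_substPow_theta2 (k + 1))
      (append_mem_substPow_theta2_a hw (replicate_mem_substPow_theta2 k))
    refine (ih hw').infix ?_
    have := List.replicate_append_append_replicate_infix AB.a w (L := N + 1) (R := N + 1)
      (L' := N + 2 ^ (k + 1)) (R' := 2 ^ k + N)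
      (by have := Nat.one_le_two_pow (n := k + 1); omega)
      (by have := Nat.one_le_two_pow (n := k); omega)
    simpa only [List.replicate_add, List.append_assoc] using this

lemma padPoint_mem_substShift_theta2 {k : ℕ} {w : List AB} (hw : w ∈ substPow theta2 k .a) :
    padPoint .a w ∈ substShift theta2 :=
  padPoint_mem_substShift (isLegal_replicate_append_append_replicate hw)

lemma mem_lang_substShift_theta2 {u : List AB} :
    u ∈ lang (substShift theta2) ↔ IsLegal theta2 u := by
  refine ⟨IsLegal.of_mem_lang, fun hu => ?_⟩
  obtain ⟨K, -, w, hw, huw⟩ := IsLegal.exists_mem_substPow_theta2 hu 0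
  exact mem_lang_of_infix (padPoint_mem_substShift_theta2 hw) (wordAt_padPoint_zero _ w) huw

lemma substShift_theta2_nonempty : (substShift theta2).Nonempty :=
  ⟨_, padPoint_mem_substShift_theta2 (replicate_mem_substPow_theta2 0)⟩

lemma complexity_theta2_le (m n : ℕ) :
    complexity (substShift theta2) n ≤
      2 ^ m * ((substPow theta2 m .a).card + (substPow theta2 m .b).card) ^ (n / 2 ^ m + 2) := by
  set S := substPow theta2 m .a ∪ substPow theta2 m .b
  have hS : ∀ b ∈ S, b.length = 2 ^ m := by
    simp only [S, Finset.mem_union]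
    rintro b (hb | hb) <;> exact length_of_mem_substPow theta2_length hb
  have hcard : S.card = (substPow theta2 m .a).card + (substPow theta2 m .b).card :=
    Finset.card_union_of_disjoint (pairwise_disjoint_substPow theta2_length
      theta2_pairwise_disjoint m (by decide))
  rw [← hcard]
  refine le_trans ?_ (List.ncard_infix_flatten_le (by positivity) hS
    (Finset.mem_union_left _ (replicate_mem_substPow_theta2 m)) n)
  rw [complexity, Nat.card_coe_set_eq]
  refine Set.ncard_le_ncard ?_ ((List.finite_length_eq AB n).subset fun _ hu => hu.1)
  rintro u ⟨hn, hu⟩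
  obtain ⟨K, hK, w, hw, huw⟩ :=
    IsLegal.exists_mem_substPow_theta2 (mem_lang_substShift_theta2.1 hu) m
  rw [← Nat.sub_add_cancel hK, mem_substPow_add] at hw
  obtain ⟨v, -, hwv⟩ := hw
  obtain ⟨B, hB, rfl⟩ := exists_flatten_of_mem_wordSubst hwv
  refine ⟨hn, B, fun b hb => ?_, huw⟩
  obtain ⟨_ | _, hc⟩ := hB b hb
  exacts [Finset.mem_union_left _ hc, Finset.mem_union_right _ hc]

lemma card_substPow_theta2_pow_le_complexity (m r : ℕ) :
    (substPow theta2 m .a).card ^ r ≤ complexity (substShift theta2) (r * 2 ^ m) := by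
  have hlen : ∀ c, ∀ w ∈ substPow theta2 m c, w.length = 2 ^ m :=
    fun _ _ hw => length_of_mem_substPow theta2_length hw
  have hlegal : IsLegal theta2 (List.replicate r AB.a) :=
    ⟨.a, r, _, replicate_mem_substPow_theta2 r,
      List.prefix_iff_eq_take.2 (by simp [Nat.lt_two_pow_self.le]) |>.isInfix⟩
  have hsub : (wordSubstPow theta2 m (List.replicate r .a) : Set (List AB)) ⊆
      {u | u.length = r * 2 ^ m ∧ u ∈ lang (substShift theta2)} := by
    intro x hx
    refine ⟨by rw [length_of_mem_wordSubst hlen hx]; simp [mul_comm], ?_⟩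
    exact mem_lang_substShift_theta2.2 (hlegal.of_mem_wordSubstPow theta2_nonempty hx)
  calc (substPow theta2 m .a).card ^ r = (wordSubstPow theta2 m (List.replicate r .a)).card := by
        rw [wordSubstPow, card_wordSubst hlen]; simp
    _ ≤ complexity (substShift theta2) (r * 2 ^ m) := by
        rw [complexity, ← Set.ncard_coe_finset, Nat.card_coe_set_eq]
        exact Set.ncard_le_ncard hsub ((List.finite_length_eq AB _).subset fun _ hu => hu.1)

lemma topEntropy_theta2_le (m : ℕ) :
    topEntropy (substShift theta2) ≤
      Real.log (m + 2) / 2 ^ m + ∑ n ∈ Finset.range m, Real.log (n + 1) / 2 ^ (n + 1) := by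
  set D := (substPow theta2 m .a).card + (substPow theta2 m .b).card
  have hD : (D : ℝ) = (m + 2) * (substPow theta2 m .b).card := by
    simp only [D, card_substPow_theta2_a]; push_cast; ring
  have hbpos : (0 : ℝ) < (substPow theta2 m .b).card := by
    exact_mod_cast (substPow_nonempty theta2_nonempty m .b).card_pos
  have hDpos : (0 : ℝ) < D := by rw [hD]; positivity
  have hbound := limsup_div_le_of_le (f := fun n => Real.log (complexity (substShift theta2) n))
    (fun n => Real.log_natCast_nonneg _) (k := 2 ^ m) (by positivity)
    (c := m * Real.log 2 + 2 * Real.log D) (Real.log_natCast_nonneg D) fun n => by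
      have hpos : (0 : ℝ) < complexity (substShift theta2) n := by
        exact_mod_cast complexity_pos substShift_theta2_nonempty n
      calc Real.log (complexity (substShift theta2) n)
          ≤ Real.log (2 ^ m * D ^ (n / 2 ^ m + 2)) :=
            Real.log_le_log hpos (by exact_mod_cast complexity_theta2_le m n)
        _ = m * Real.log 2 + 2 * Real.log D + (n / 2 ^ m : ℕ) * Real.log D := by
            rw [Real.log_mul (by positivity) (by positivity), Real.log_pow, Real.log_pow]
            push_cast
            ring
  refine hbound.trans_eq ?_
  rw [hD, Real.log_mul (by positivity) hbpos.ne', log_card_substPow_theta2_b]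
  push_cast
  field_simp

lemma sum_le_topEntropy_theta2 (m : ℕ) :
    ∑ n ∈ Finset.range m, Real.log (n + 1) / 2 ^ (n + 1) ≤ topEntropy (substShift theta2) := by
  have hbpos : (0 : ℝ) < (substPow theta2 m .b).card := by
    exact_mod_cast (substPow_nonempty theta2_nonempty m .b).card_pos
  have hapos : (0 : ℝ) < (substPow theta2 m .a).card := by
    exact_mod_cast (substPow_nonempty theta2_nonempty m .a).card_pos
  have hab : Real.log (substPow theta2 m .b).card ≤ Real.log (substPow theta2 m .a).card :=
    Real.log_le_log hbpos (by rw [card_substPow_theta2_a]; push_cast; nlinarith)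
  have hbound := le_limsup_div_of_le (monotone_log_complexity substShift_theta2_nonempty)
    (isBoundedUnder_log_complexity_div _) (k := 2 ^ m) (by positivity)
    (L := Real.log (substPow theta2 m .a).card) (Real.log_natCast_nonneg _) fun r => by
      rw [← Real.log_pow]
      exact Real.log_le_log (by positivity)
        (by exact_mod_cast card_substPow_theta2_pow_le_complexity m r)
  refine le_trans ?_ hbound
  rw [← mul_div_cancel_left₀ (∑ n ∈ Finset.range m, Real.log (n + 1) / 2 ^ (n + 1))
    (by positivity : (2 : ℝ) ^ m ≠ 0), ← log_card_substPow_theta2_b]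
  push_cast
  gcongr

lemma summable_log_succ_div_two_pow_succ :
    Summable fun n : ℕ => Real.log (n + 1) / 2 ^ (n + 1) := by
  refine .of_nonneg_of_le
    (fun n => div_nonneg (Real.log_nonneg (by simp)) (by positivity)) (fun n => ?_)
    (summable_pow_mul_geometric_of_norm_lt_one 1 (r := (1 / 2 : ℝ)) (by norm_num))
  have hlog : Real.log (n + 1) ≤ n := by
    linarith [Real.log_le_sub_one_of_pos (x := (n : ℝ) + 1) (by positivity)]
  calc Real.log (n + 1) / 2 ^ (n + 1) ≤ n / 2 ^ n :=
        div_le_div₀ n.cast_nonneg hlog (by positivity) (pow_le_pow_right₀ (by norm_num) n.le_succ)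
    _ = (n : ℝ) ^ 1 * (1 / 2) ^ n := by simp [div_eq_mul_inv]

/-- the topological entropy of the subshift of θ(a)={aa,ab}, θ(b)={ba}
equals Σ_{n=1}^∞ 2^{-n} log n. -/
theorem theta2_entropy :
    topEntropy (substShift theta2) = ∑' n : ℕ, Real.log (n + 1) / 2 ^ (n + 1) := by
  have hsum := summable_log_succ_div_two_pow_succ.hasSum.tendsto_sum_nat
  -- `log (m + 2) / 2 ^ m` is four times the `(m + 1)`-st term of the series.
  have hlog : Tendsto (fun m : ℕ => Real.log (m + 2) / 2 ^ m) atTop (𝓝 0) := by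
    have := (summable_log_succ_div_two_pow_succ.tendsto_atTop_zero.comp
      (tendsto_add_atTop_nat 1)).const_mul 4
    rw [mul_zero] at this
    refine this.congr fun m => ?_
    simp only [Function.comp_apply, Nat.cast_add, Nat.cast_one, add_assoc, one_add_one_eq_two,
      pow_succ]
    ring
  have hupper : Tendsto (fun m : ℕ => Real.log (m + 2) / 2 ^ m +
      ∑ n ∈ Finset.range m, Real.log (n + 1) / 2 ^ (n + 1)) atTop
      (𝓝 (∑' n : ℕ, Real.log (n + 1) / 2 ^ (n + 1))) := by
    simpa using hlog.add hsum
  exact le_antisymm (ge_of_tendsto hupper (Eventually.of_forall topEntropy_theta2_le))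
    (le_of_tendsto' hsum sum_le_topEntropy_theta2)
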